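/- arXiv:0709.0885 — 2 statements merged into one kernel-verified Lean document; each statement's English description precedes it below -/
import Mathlib

section
/- For all integers n and m with m odd, n even, and 1 ≤ m ≤ n − 1, one has S_{3,0}([2^n, 2^n + 2^m)) = 0. -/
/-!
Prepending a leading binary digit flips the sign `(-1)^σ`, so for `x ≤ 2^p` the block
`[2^p, 2^p + x)` contributes `-S_{3,l'}(x)`, where `l' ≡ l - 2^p (mod 3)`. For `n` even,
`2^n ≡ 1`, hence `S_{3,0}([2^n, 2^n + 2^m)) = -S_{3,2}(2^m)`. The same block decomposition,
applied to `[0, 2^(p+1)) = [0, 2^p) ∪ [2^p, 2^(p+1))`, gives a linear recursion for the triple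
`(S_{3,0}, S_{3,1}, S_{3,2})(2^p)`, whose solution is `(3^k, -3^k, 0)` at `p = 2k + 1`.
-/

/-- binary digit sum -/
def sigma2 (n : ℕ) : ℕ := (Nat.digits 2 n).sum

/-- `S m l x = Σ_{0 ≤ n < x, n ≡ l (mod m)} (−1)^{σ(n)}` -/
def S (m l x : ℕ) : ℤ :=
  ∑ n ∈ (Finset.range x).filter (fun n => n % m = l), (-1 : ℤ) ^ sigma2 n

/-- `Sint m l x y = S_{m,l}([x,y)) = S_{m,l}(y) − S_{m,l}(x)` -/
def Sint (m l x y : ℕ) : ℤ := S m l y - S m l x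

theorem Nat.digits_sum_add_pow_mul {b p k m : ℕ} (hb : 1 < b) (hk : k < b ^ p) :
    (Nat.digits b (k + b ^ p * m)).sum = (Nat.digits b k).sum + (Nat.digits b m).sum := by
  rcases Nat.eq_zero_or_pos m with rfl | hm
  · simp
  obtain ⟨z, hz⟩ := Nat.exists_eq_add_of_le ((Nat.digits_length_le_iff hb k).2 hk)
  rw [hz, ← Nat.digits_append_zeroes_append_digits hb hm]
  simp

theorem sigma2_two_pow_add {p k : ℕ} (hk : k < 2 ^ p) : sigma2 (2 ^ p + k) = sigma2 k + 1 := by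
  simpa [sigma2, add_comm] using Nat.digits_sum_add_pow_mul (m := 1) one_lt_two hk

theorem Sint_two_pow_add {q l l' p x : ℕ} (hx : x ≤ 2 ^ p)
    (hres : ∀ i < x, (2 ^ p + i) % q = l ↔ i % q = l') :
    Sint q l (2 ^ p) (2 ^ p + x) = -S q l' x := by
  rw [Sint, S, S, S, Finset.sum_filter, Finset.sum_filter, Finset.sum_filter,
    Finset.sum_range_add, add_sub_cancel_left, ← Finset.sum_neg_distrib]
  refine Finset.sum_congr rfl fun i hi => ?_
  have hi := Finset.mem_range.1 hi
  rw [sigma2_two_pow_add (hi.trans_le hx), pow_succ]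
  simp only [hres i hi]
  split_ifs <;> ring

theorem S_two_pow_succ {q l l' p : ℕ} (hres : ∀ i < 2 ^ p, (2 ^ p + i) % q = l ↔ i % q = l') :
    S q l (2 ^ (p + 1)) = S q l (2 ^ p) - S q l' (2 ^ p) := by
  have h := Sint_two_pow_add le_rfl hres
  rw [Sint, ← two_mul, ← pow_succ'] at h
  linarith

theorem two_pow_mod_three_of_even {p : ℕ} (hp : Even p) : 2 ^ p % 3 = 1 := by
  obtain ⟨k, rfl⟩ := hp
  rw [← two_mul, pow_mul, Nat.pow_mod]
  norm_num

theorem two_pow_mod_three_of_odd {p : ℕ} (hp : Odd p) : 2 ^ p % 3 = 2 := by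
  obtain ⟨k, rfl⟩ := hp
  rw [pow_succ, pow_mul, Nat.mul_mod, Nat.pow_mod]
  norm_num

theorem S_three_two_pow_odd (k : ℕ) :
    S 3 0 (2 ^ (2 * k + 1)) = 3 ^ k ∧ S 3 1 (2 ^ (2 * k + 1)) = -3 ^ k ∧
      S 3 2 (2 ^ (2 * k + 1)) = 0 := by
  induction k with
  | zero => refine ⟨?_, ?_, ?_⟩ <;> decide
  | succ k ih =>
    obtain ⟨h0, h1, h2⟩ := ih
    set p := 2 * k + 1
    have hodd : 2 ^ p % 3 = 2 := two_pow_mod_three_of_odd (odd_two_mul_add_one k)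
    have heven : 2 ^ (p + 1) % 3 = 1 := two_pow_mod_three_of_even ⟨k + 1, by omega⟩
    have a0 : S 3 0 (2 ^ (p + 1)) = S 3 0 (2 ^ p) - S 3 1 (2 ^ p) :=
      S_two_pow_succ fun i _ => by omega
    have a1 : S 3 1 (2 ^ (p + 1)) = S 3 1 (2 ^ p) - S 3 2 (2 ^ p) :=
      S_two_pow_succ fun i _ => by omega
    have a2 : S 3 2 (2 ^ (p + 1)) = S 3 2 (2 ^ p) - S 3 0 (2 ^ p) :=
      S_two_pow_succ fun i _ => by omega
    have b0 : S 3 0 (2 ^ (p + 2)) = S 3 0 (2 ^ (p + 1)) - S 3 2 (2 ^ (p + 1)) :=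
      S_two_pow_succ fun i _ => by omega
    have b1 : S 3 1 (2 ^ (p + 2)) = S 3 1 (2 ^ (p + 1)) - S 3 0 (2 ^ (p + 1)) :=
      S_two_pow_succ fun i _ => by omega
    have b2 : S 3 2 (2 ^ (p + 2)) = S 3 2 (2 ^ (p + 1)) - S 3 1 (2 ^ (p + 1)) :=
      S_two_pow_succ fun i _ => by omega
    rw [show 2 * (k + 1) + 1 = p + 2 by omega, b0, b1, b2, a0, a1, a2, h0, h1, h2]
    refine ⟨by ring, by ring, by ring⟩

theorem stmt_3_general (n m : ℕ) (hm : Odd m) (hn : Even n) (h2 : m ≤ n - 1) :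
    Sint 3 0 (2 ^ n) (2 ^ n + 2 ^ m) = 0 := by
  obtain ⟨k, rfl⟩ := hm
  have hn1 := two_pow_mod_three_of_even hn
  rw [Sint_two_pow_add (l' := 2) (Nat.pow_le_pow_right two_pos (by omega)) fun i _ => by omega,
    (S_three_two_pow_odd k).2.2, neg_zero]

theorem stmt_3 (n m : ℕ) (hm : Odd m) (hn : Even n) (h1 : 1 ≤ m) (h2 : m ≤ n - 1) :
    Sint 3 0 (2 ^ n) (2 ^ n + 2 ^ m) = 0 :=
  stmt_3_general n m hm hn h2
end

section
/- For all nonnegative integers x and y with x < y, one has S_{6,1}([2x, 2y)) = −S_{3,0}([x, y)). -/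
/-! Every `n ≡ 2l+1 (mod 2m)` is odd, `n = 2k+1` with `k ≡ l (mod m)`, and appending the digit 1
flips the sign: `σ(2k+1) = σ(k) + 1`. Hence `S_{2m,2l+1}(2x) = −S_{m,l}(x)` for all `m, l, x`. -/

lemma sigma2_two_mul_add_one (k : ℕ) : sigma2 (2 * k + 1) = sigma2 k + 1 := by
  have h_div : (2 * k + 1) / 2 = k := by omega
  have h_mod : (2 * k + 1) % 2 = 1 := by omega
  rw [sigma2, Nat.digits_def' one_lt_two (by omega), List.sum_cons, h_div, h_mod, sigma2,
    add_comm]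

lemma two_mul_add_one_mod_two_mul (k m : ℕ) : (2 * k + 1) % (2 * m) = 2 * (k % m) + 1 := by
  rcases Nat.eq_zero_or_pos m with rfl | hm
  · simp
  calc (2 * k + 1) % (2 * m) = (2 * (k % m) + 1 + 2 * m * (k / m)) % (2 * m) := by
        rw [Nat.mul_assoc]
        congr 1
        linarith [Nat.mod_add_div k m]
    _ = 2 * (k % m) + 1 := by
        rw [Nat.add_mul_mod_self_left, Nat.mod_eq_of_lt]
        have := Nat.mod_lt k hm
        omega

lemma S_succ (m l x : ℕ) :
    S m l (x + 1) = S m l x + if x % m = l then (-1 : ℤ) ^ sigma2 x else 0 := by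
  rw [S, S, Finset.range_add_one, Finset.filter_insert]
  split_ifs
  · rw [Finset.sum_insert (by simp), add_comm]
  · rw [add_zero]

lemma S_two_mul_two_mul_add_one (m l x : ℕ) : S (2 * m) (2 * l + 1) (2 * x) = -S m l x := by
  induction x with
  | zero => simp [S]
  | succ x ih =>
    have h_even : 2 * x % (2 * m) ≠ 2 * l + 1 := by
      rw [Nat.mul_mod_mul_left]
      omega
    have h_odd : (2 * x + 1) % (2 * m) = 2 * l + 1 ↔ x % m = l := by
      rw [two_mul_add_one_mod_two_mul]
      omega
    rw [mul_add_one, S_succ, S_succ, S_succ, if_neg h_even, ih, if_congr h_odd rfl rfl]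
    split_ifs
    · rw [sigma2_two_mul_add_one, pow_succ]
      ring
    · ring

theorem stmt_7_general (x y : ℕ) :
    Sint 6 1 (2 * x) (2 * y) = -Sint 3 0 x y := by
  have hS (z : ℕ) : S 6 1 (2 * z) = -S 3 0 z := S_two_mul_two_mul_add_one 3 0 z
  rw [Sint, Sint, hS, hS]
  ring

theorem stmt_7 (x y : ℕ) (hxy : x < y) :
    Sint 6 1 (2 * x) (2 * y) = -Sint 3 0 x y :=
  stmt_7_general x y
end
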